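/- Suppose (A,B) has the FGM distribution with parameter θ and the rewarding rule is (x=w, y=w, z=0) with w < 3/2. For an agent with period-1 cost c < 1/2, the expected payoff from waiting, u_np(c,θ) = ∫₀^{min(w,1)} (w − k) g_c(k) dk, equals (2w²/3)·(3/4 + (1/2 − c)(3/2 − w)θ) when w < 1, and equals (1/2 − c)θ/3 + w − 1/2 when w ≥ 1; in both cases u_np is strictly increasing in θ. -/
import Mathlib


open intervalIntegral

/-- FGM conditional density of `B` given `A = c`. -/
noncomputable def fgmCondDensity (θ c k : ℝ) : ℝ := 1 + θ * (1 - 2 * c) * (1 - 2 * k)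

/-- Expected payoff from skipping period 1 under rule `(x=w, y=w, z=0)`. -/
noncomputable def unp (w c θ : ℝ) : ℝ :=
  ∫ k in (0:ℝ)..(min w 1), (w - k) * fgmCondDensity θ c k

lemma key_integral (a w m : ℝ) :
    (∫ k in (0:ℝ)..m, (w - k) * (1 + a * (1 - 2 * k)))
      = w * m - m ^ 2 / 2 + a * (w * m - (1 + 2 * w) * m ^ 2 / 2 + 2 * m ^ 3 / 3) := by
  have hF : ∀ x : ℝ, HasDerivAt
      (fun k : ℝ => w * k - k ^ 2 / 2 + a * (w * k - (1 + 2 * w) * k ^ 2 / 2 + 2 * k ^ 3 / 3))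
      ((w - x) * (1 + a * (1 - 2 * x))) x := by
    intro x
    have h : HasDerivAt
        (fun k : ℝ => w * k - k ^ 2 / 2 + a * (w * k - (1 + 2 * w) * k ^ 2 / 2 + 2 * k ^ 3 / 3))
        (w * 1 - (2 * x ^ 1) / 2 + a * (w * 1 - (1 + 2 * w) * (2 * x ^ 1) / 2
          + (2 * (3 * x ^ 2)) / 3)) x := by
      exact ((((hasDerivAt_id x).const_mul w).sub ((hasDerivAt_pow 2 x).div_const 2)).add
        (((((hasDerivAt_id x).const_mul w).sub
            (((hasDerivAt_pow 2 x).const_mul (1 + 2 * w)).div_const 2)).add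
          (((hasDerivAt_pow 3 x).const_mul 2).div_const 3)).const_mul a))
    convert h using 1
    ring
  have hcont : IntervalIntegrable (fun x : ℝ => (w - x) * (1 + a * (1 - 2 * x)))
      MeasureTheory.volume 0 m := by
    apply Continuous.intervalIntegrable
    continuity
  have := intervalIntegral.integral_eq_sub_of_hasDerivAt (f := fun k : ℝ =>
      w * k - k ^ 2 / 2 + a * (w * k - (1 + 2 * w) * k ^ 2 / 2 + 2 * k ^ 3 / 3))
      (fun x _ => hF x) hcont
  rw [this]
  ring

lemma unp_formula (w c θ : ℝ) :
    unp w c θ = w * (min w 1) - (min w 1) ^ 2 / 2 + (θ * (1 - 2 * c)) *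
      (w * (min w 1) - (1 + 2 * w) * (min w 1) ^ 2 / 2 + 2 * (min w 1) ^ 3 / 3) := by
  rw [unp]
  simp only [fgmCondDensity]
  rw [← key_integral (θ * (1 - 2 * c)) w (min w 1)]

/-- Under the FGM distribution with parameter `θ` and rule `(w, w, 0)` with
`w < 3/2`, for an agent with period-1 cost `c < 1/2`, the expected payoff from waiting
equals `(2w²/3)(3/4 + (1/2 − c)(3/2 − w)θ)` when `w < 1` and `(1/2 − c)θ/3 + w − 1/2`
when `w ≥ 1`; in both cases it is strictly increasing in `θ`. -/
theorem stmt_11 (w c : ℝ) (hw0 : 0 < w) (hw : w < 3/2) (hc0 : 0 ≤ c) (hc : c < 1/2) :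
    (w < 1 → ∀ θ ∈ Set.Icc (-1:ℝ) 1,
      unp w c θ = (2 * w ^ 2 / 3) * (3/4 + (1/2 - c) * (3/2 - w) * θ)) ∧
    (1 ≤ w → ∀ θ ∈ Set.Icc (-1:ℝ) 1,
      unp w c θ = (1/2 - c) * θ / 3 + w - 1/2) ∧
    StrictMonoOn (fun θ => unp w c θ) (Set.Icc (-1:ℝ) 1) := by
  have h1 : ∀ θ : ℝ, w < 1 →
      unp w c θ = (2 * w ^ 2 / 3) * (3/4 + (1/2 - c) * (3/2 - w) * θ) := by
    intro θ hw1
    rw [unp_formula, min_eq_left hw1.le]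
    ring
  have h2 : ∀ θ : ℝ, 1 ≤ w → unp w c θ = (1/2 - c) * θ / 3 + w - 1/2 := by
    intro θ hw1
    rw [unp_formula, min_eq_right hw1]
    ring
  refine ⟨fun hw1 θ _ => h1 θ hw1, fun hw1 θ _ => h2 θ hw1, ?_⟩
  intro θ1 _ θ2 _ hlt
  rcases lt_or_ge w 1 with hw1 | hw1
  · simp only [h1 _ hw1]
    nlinarith [mul_pos (mul_pos (mul_pos (pow_pos hw0 2)
      (show (0:ℝ) < 1/2 - c by linarith)) (show (0:ℝ) < 3/2 - w by linarith))
      (sub_pos.2 hlt)]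
  · simp only [h2 _ hw1]
    nlinarith
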